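/- Suppose the basic algorithm defined by y^{k+1} = A(y^k + β_k v^k) is strongly perturbation resilient, {η_ℓ} is a summable sequence of positive reals, and the inner-loop perturbations v^{k,n} of the superiorized algorithm satisfy ‖v^{k,n}‖ ≤ η_{ℓ(k,n)} with (k,n) ↦ ℓ(k,n) injective and strictly increasing in lexicographic order. Then the perturbed sequence {y^k} generated by the superiorized algorithm has the form y^{k+1} = A(y^k + β_k v^k) with {β_k} summable nonnegative and {v^k} bounded; consequently, if the unperturbed algorithm produces an ε-output for every initial point, the superiorized algorithm produces an ε'-output for every ε' > ε. -/

import Mathlib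

/-!
The whole inner loop of step `k` adds the single vector `w_k = ∑ₙ v^{k,n}`, so the superiorized
step is `y^{k+1} = A(y^k + β_k v^k)` with `β_k = ‖w_k‖` and the unit vector `v^k = w_k / ‖w_k‖`.
Here `β_k ≤ ∑ₙ η_{ℓ(k,n)}`, and these block sums are summable: the lexicographic monotonicity of
`ℓ` makes it injective, so they regroup a subseries of the summable `∑ₗ η_ℓ`. Strong perturbation
resilience then yields the ε'-outputs.
-/

/-- x^K is the ε-output of the sequence x with respect to the proximity
function Prox. -/
def IsEpsOutput {L : ℕ} (Prox : EuclideanSpace ℝ (Fin L) → ℝ) (ε : ℝ)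
    (x : ℕ → EuclideanSpace ℝ (Fin L)) (K : ℕ) : Prop :=
  Prox (x K) ≤ ε ∧ ∀ k < K, ε < Prox (x k)

open Function

theorem strictMono_sigmaLex_of_lex {γ : Type*} [Preorder γ] {N : ℕ → ℕ} {ℓ : ℕ → ℕ → γ}
    (hlex : ∀ k n k' n', n < N k → n' < N k' → (k < k' ∨ (k = k' ∧ n < n')) → ℓ k n < ℓ k' n') :
    StrictMono (fun p : Σₗ k, Fin (N k) => ℓ (ofLex p).1 (ofLex p).2) := by
  rintro ⟨k, n⟩ ⟨k', n'⟩ (⟨_, _, hk⟩ | ⟨_, _, hn⟩)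
  · exact hlex _ _ _ _ (Fin.is_lt _) (Fin.is_lt _) (Or.inl hk)
  · exact hlex _ _ _ _ (Fin.is_lt _) (Fin.is_lt _) (Or.inr ⟨rfl, hn⟩)

theorem summable_sum_range_comp_of_injective {ι E : Type*} [NormedAddCommGroup E]
    [CompleteSpace E] {η : ι → E} (hη : Summable η) {N : ℕ → ℕ} {ℓ : ℕ → ℕ → ι}
    (hℓ : Injective (fun p : Σ k, Fin (N k) => ℓ p.1 p.2)) :
    Summable (fun k => ∑ n ∈ Finset.range (N k), η (ℓ k n)) := by
  convert (hη.comp_injective hℓ).sigma using 2 with k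
  rw [tsum_fintype, ← Fin.sum_univ_eq_sum_range]
  rfl

section NormalizedVector

variable {E : Type*} [NormedAddCommGroup E] [NormedSpace ℝ E]

theorem norm_smul_inv_norm_smul (w : E) : ‖w‖ • ‖w‖⁻¹ • w = w := by
  rcases eq_or_ne w 0 with rfl | hw
  · simp
  · exact smul_inv_smul₀ (norm_ne_zero_iff.mpr hw) w

theorem norm_inv_norm_smul_le_one (w : E) : ‖‖w‖⁻¹ • w‖ ≤ 1 := by
  rw [norm_smul, norm_inv, norm_norm]
  exact inv_mul_le_one_of_le₀ le_rfl (norm_nonneg w)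

end NormalizedVector

theorem superiorized_produces_output_general {L : ℕ}
    (A : EuclideanSpace ℝ (Fin L) → EuclideanSpace ℝ (Fin L))
    (Prox : EuclideanSpace ℝ (Fin L) → ℝ)
    -- strong perturbation resilience of the basic algorithm:
    (hSPR : ∀ ε > (0 : ℝ),
      (∀ x0 : EuclideanSpace ℝ (Fin L),
        ∃ K, IsEpsOutput Prox ε (fun n => A^[n] x0) K) →
      ∀ ε' > ε, ∀ (β : ℕ → ℝ) (v : ℕ → EuclideanSpace ℝ (Fin L))
        (y : ℕ → EuclideanSpace ℝ (Fin L)),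
        (∀ k, 0 ≤ β k) → Summable β → (∃ M : ℝ, ∀ k, ‖v k‖ ≤ M) →
        (∀ k, y (k + 1) = A (y k + β k • v k)) →
        ∃ K, IsEpsOutput Prox ε' y K)
    -- the summable kernel of positive reals:
    (η : ℕ → ℝ) (hηsum : Summable η)
    (N : ℕ → ℕ)
    -- inner-loop perturbations and their kernel indices:
    (v : ℕ → ℕ → EuclideanSpace ℝ (Fin L)) (ℓ : ℕ → ℕ → ℕ)
    (hbound : ∀ k n, n < N k → ‖v k n‖ ≤ η (ℓ k n))
    -- (k,n) ↦ ℓ(k,n) is strictly increasing in lexicographic order (hence injective):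
    (hlex : ∀ k n k' n', n < N k → n' < N k' →
      (k < k' ∨ (k = k' ∧ n < n')) → ℓ k n < ℓ k' n')
    -- the sequence generated by the superiorized algorithm:
    (y : ℕ → EuclideanSpace ℝ (Fin L))
    (hrec : ∀ k, y (k + 1) = A (y k + ∑ n ∈ Finset.range (N k), v k n))
    -- the basic algorithm produces an ε-output for every initial point:
    (ε : ℝ) (hε : 0 < ε)
    (hout : ∀ x0 : EuclideanSpace ℝ (Fin L),
      ∃ K, IsEpsOutput Prox ε (fun n => A^[n] x0) K) :
    (∃ (β : ℕ → ℝ) (V : ℕ → EuclideanSpace ℝ (Fin L)),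
        (∀ k, 0 ≤ β k) ∧ Summable β ∧ (∃ M : ℝ, ∀ k, ‖V k‖ ≤ M) ∧
        ∀ k, y (k + 1) = A (y k + β k • V k)) ∧
      ∀ ε' > ε, ∃ K, IsEpsOutput Prox ε' y K := by
  set w := fun k => ∑ n ∈ Finset.range (N k), v k n
  have hw_le : ∀ k, ‖w k‖ ≤ ∑ n ∈ Finset.range (N k), η (ℓ k n) := fun k =>
    norm_sum_le_of_le _ fun n hn => hbound k n (Finset.mem_range.mp hn)
  have hβ_summable : Summable fun k => ‖w k‖ :=
    .of_nonneg_of_le (fun k => norm_nonneg _) hw_le <|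
      summable_sum_range_comp_of_injective hηsum (strictMono_sigmaLex_of_lex hlex).injective
  have hV_bound : ∃ M : ℝ, ∀ k, ‖‖w k‖⁻¹ • w k‖ ≤ M := ⟨1, fun k => norm_inv_norm_smul_le_one _⟩
  have hrec' : ∀ k, y (k + 1) = A (y k + ‖w k‖ • ‖w k‖⁻¹ • w k) := fun k => by
    rw [norm_smul_inv_norm_smul, hrec]
  refine ⟨⟨_, _, fun k => norm_nonneg _, hβ_summable, hV_bound, hrec'⟩, fun ε' hε' => ?_⟩
  exact hSPR ε hε hout ε' hε' _ _ y (fun k => norm_nonneg _) hβ_summable hV_bound hrec'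

/-- Lemma 1: if the basic algorithm given by `A` is strongly perturbation
resilient and produces an ε-output for every initial point, then the
superiorized version (inner perturbation loops with norms bounded by the
summable kernel {η_ℓ} on lexicographically increasing indices, followed by one
application of `A`) can be written as y^{k+1} = A(y^k + β_k v^k) with {β_k}
summable nonnegative and {v^k} bounded, and hence produces an ε'-output for
every ε' > ε. -/
theorem superiorized_produces_output {L : ℕ}
    (A : EuclideanSpace ℝ (Fin L) → EuclideanSpace ℝ (Fin L))
    (Prox : EuclideanSpace ℝ (Fin L) → ℝ)
    -- strong perturbation resilience of the basic algorithm: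
    (hSPR : ∀ ε > (0 : ℝ),
      (∀ x0 : EuclideanSpace ℝ (Fin L),
        ∃ K, IsEpsOutput Prox ε (fun n => A^[n] x0) K) →
      ∀ ε' > ε, ∀ (β : ℕ → ℝ) (v : ℕ → EuclideanSpace ℝ (Fin L))
        (y : ℕ → EuclideanSpace ℝ (Fin L)),
        (∀ k, 0 ≤ β k) → Summable β → (∃ M : ℝ, ∀ k, ‖v k‖ ≤ M) →
        (∀ k, y (k + 1) = A (y k + β k • v k)) →
        ∃ K, IsEpsOutput Prox ε' y K)
    -- the summable kernel of positive reals: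
    (η : ℕ → ℝ) (hηpos : ∀ ℓ, 0 < η ℓ) (hηsum : Summable η)
    -- inner-loop sizes, bounded by Nb:
    (N : ℕ → ℕ) (Nb : ℕ) (hNpos : ∀ k, 0 < N k) (hNb : ∀ k, N k ≤ Nb)
    -- inner-loop perturbations and their kernel indices:
    (v : ℕ → ℕ → EuclideanSpace ℝ (Fin L)) (ℓ : ℕ → ℕ → ℕ)
    (hbound : ∀ k n, n < N k → ‖v k n‖ ≤ η (ℓ k n))
    -- (k,n) ↦ ℓ(k,n) is strictly increasing in lexicographic order (hence injective):
    (hlex : ∀ k n k' n', n < N k → n' < N k' →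
      (k < k' ∨ (k = k' ∧ n < n')) → ℓ k n < ℓ k' n')
    -- the sequence generated by the superiorized algorithm:
    (y : ℕ → EuclideanSpace ℝ (Fin L))
    (hrec : ∀ k, y (k + 1) = A (y k + ∑ n ∈ Finset.range (N k), v k n))
    -- the basic algorithm produces an ε-output for every initial point:
    (ε : ℝ) (hε : 0 < ε)
    (hout : ∀ x0 : EuclideanSpace ℝ (Fin L),
      ∃ K, IsEpsOutput Prox ε (fun n => A^[n] x0) K) :
    (∃ (β : ℕ → ℝ) (V : ℕ → EuclideanSpace ℝ (Fin L)),
        (∀ k, 0 ≤ β k) ∧ Summable β ∧ (∃ M : ℝ, ∀ k, ‖V k‖ ≤ M) ∧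
        ∀ k, y (k + 1) = A (y k + β k • V k)) ∧
      ∀ ε' > ε, ∃ K, IsEpsOutput Prox ε' y K :=
  superiorized_produces_output_general A Prox hSPR η hηsum N v ℓ hbound hlex y hrec ε hε hout
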